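/- arXiv:1005.1528 — 3 statements merged into one kernel-verified Lean document; each statement's English description precedes it below -/
import Mathlib

section
/- There are no Gaussian integers x, y, z with xyz ≠ 0 satisfying x^4 - y^4 = i·z^2. -/
/-!
Write `π = 1 + i`, so that `2 = -iπ²`; call an element odd if `π` does not divide it.
After dividing out the gcd of `x` and `y`, a congruence modulo 4 shows that `x` and `y` are odd.
For odd coprime `x, y` with `z² ~ x⁴ - y⁴` (associated), replacing `y` by `iy` if necessary
gives `x + y = πe`, `x - y = πf` with `e, f` odd and coprime, and `x⁴ - y⁴ = -2ef(e² + f²)`.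
The factors `e`, `f`, `e² + f²` are pairwise coprime, hence squares up to units:
`e ~ g²`, `f ~ h²`, `e² + f² ~ s²`. Squares of units are `±1`, so `e² + f² = ±g⁴ ± h⁴`, and
`4 ∣ e² + f²` excludes equal signs. Thus `s² ~ g⁴ - h⁴` is a new solution with
`N(s) < N(z)`, and infinite descent on the norm finishes the proof.
-/

open Zsqrtd

local notation "ℤ[i]" => GaussianInt

local notation "π" => (⟨1, 1⟩ : ℤ[i])

theorem IsCoprime.mul_sq_add_sq {R : Type*} [CommRing R] {e f : R} (h : IsCoprime e f) :
    IsCoprime (e * f) (e ^ 2 + f ^ 2) := by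
  have he : IsCoprime e (e ^ 2 + f ^ 2) := by
    simpa [sq, add_comm] using h.pow_right (n := 2)
  have hf : IsCoprime f (e ^ 2 + f ^ 2) := by
    simpa [sq] using h.symm.pow_right (n := 2)
  exact he.mul_left hf

theorem exists_associated_sq_of_associated_prime_sq_mul {M : Type*} [CommMonoidWithZero M]
    [IsCancelMulZero M] {p z a : M} (hp : Prime p) (h : Associated (z ^ 2) (p ^ 2 * a)) :
    ∃ w, Associated (w ^ 2) a := by
  obtain ⟨w, rfl⟩ := hp.dvd_of_dvd_pow ((dvd_pow_self p two_ne_zero).trans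
    ((dvd_mul_right _ a).trans h.symm.dvd))
  rw [mul_pow] at h
  exact ⟨w, h.of_mul_left (Associated.refl _) (pow_ne_zero 2 hp.ne_zero)⟩

section Bezout

variable {R : Type*} [CommRing R] [IsDomain R] [IsBezout R]

theorem exists_eq_mul_isCoprime {x : R} (y : R) (hx : x ≠ 0) :
    ∃ d x' y', d ≠ 0 ∧ x = d * x' ∧ y = d * y' ∧ IsCoprime x' y' := by
  classical
  let := IsBezout.toGCDDomain R
  obtain ⟨x', y', hx', hy', hu⟩ := extract_gcd x y
  exact ⟨gcd x y, x', y', fun h => hx ((gcd_eq_zero_iff x y).1 h).1, hx', hy',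
    (gcd_isUnit_iff x' y').1 hu⟩

theorem exists_isCoprime_sub_pow_four_eq_mul_sq {u x y z : R} (hu : IsUnit u) (hx : x ≠ 0)
    (hz : z ≠ 0) (h : x ^ 4 - y ^ 4 = u * z ^ 2) :
    ∃ x' y' z', IsCoprime x' y' ∧ z' ≠ 0 ∧ x' ^ 4 - y' ^ 4 = u * z' ^ 2 := by
  obtain ⟨d, x', y', hd, rfl, rfl, hxy⟩ := exists_eq_mul_isCoprime y hx
  have hdz : (d ^ 2) ^ 2 ∣ z ^ 2 := by
    rw [← hu.dvd_mul_left, ← h]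
    exact ⟨x' ^ 4 - y' ^ 4, by ring⟩
  obtain ⟨z', rfl⟩ := (IsIntegrallyClosed.pow_dvd_pow_iff two_ne_zero).1 hdz
  refine ⟨x', y', z', hxy, right_ne_zero_of_mul hz, mul_left_cancel₀ (pow_ne_zero 4 hd) ?_⟩
  linear_combination h

theorem IsCoprime.exists_associated_sq_of_associated_sq_mul_sq_add_sq {e f w : R}
    (hef : IsCoprime e f) (h : Associated (w ^ 2) (e * f * (e ^ 2 + f ^ 2))) :
    (∃ g, Associated (g ^ 2) e) ∧ (∃ g, Associated (g ^ 2) f) ∧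
      ∃ s, Associated (s ^ 2) (e ^ 2 + f ^ 2) := by
  obtain ⟨r, hr⟩ := exists_associated_pow_of_associated_pow_mul hef.mul_sq_add_sq h
  rw [mul_comm] at h
  refine ⟨exists_associated_pow_of_associated_pow_mul hef hr, ?_,
    exists_associated_pow_of_associated_pow_mul hef.mul_sq_add_sq.symm h⟩
  rw [mul_comm] at hr
  exact exists_associated_pow_of_associated_pow_mul hef.symm hr

end Bezout

namespace GaussianInt

theorem sqrtd_sq : (sqrtd : ℤ[i]) ^ 2 = -1 := by decide

theorem isUnit_sqrtd : IsUnit (sqrtd : ℤ[i]) :=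
  .of_mul_eq_one (-sqrtd) (by linear_combination -sqrtd_sq)

theorem pi_sq : π ^ 2 = 2 * sqrtd := by decide

theorem prime_pi : Prime π := by
  have hnorm : ∀ a b : ℤ[i], a * b = π → a.norm.natAbs * b.norm.natAbs = 2 := fun a b hab => by
    rw [← Int.natAbs_mul, ← norm_mul, hab]; rfl
  refine irreducible_iff_prime.1 ⟨fun h => ?_, fun a b hab => ?_⟩
  · exact absurd (norm_eq_one_iff.2 h) (by decide)
  · simp only [← norm_eq_one_iff]
    have := hnorm a b hab.symm
    rcases Nat.prime_two.eq_one_or_self_of_dvd _ (Dvd.intro _ this) with h | h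
    · exact .inl h
    · right; rw [h] at this; omega

theorem pi_dvd_iff (w : ℤ[i]) : π ∣ w ↔ 2 ∣ w.re + w.im := by
  constructor
  · rintro ⟨c, rfl⟩
    exact ⟨c.re, by simp only [re_mul, im_mul]; ring⟩
  · rintro ⟨k, hk⟩
    exact ⟨⟨k, w.im - k⟩, by ext <;> simp only [re_mul, im_mul] <;> omega⟩

theorem two_dvd_iff (w : ℤ[i]) : 2 ∣ w ↔ 2 ∣ w.re ∧ 2 ∣ w.im := by
  exact_mod_cast intCast_dvd 2 w

theorem four_dvd_iff (w : ℤ[i]) : 4 ∣ w ↔ 4 ∣ w.re ∧ 4 ∣ w.im := by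
  exact_mod_cast intCast_dvd 4 w

theorem sq_eq_one_or_sq_eq_neg_one_of_isUnit {u : ℤ[i]} (hu : IsUnit u) :
    u ^ 2 = 1 ∨ u ^ 2 = -1 := by
  have h : u.re * u.re + u.im * u.im = 1 := by
    simpa [norm_def] using (norm_eq_one_iff' (by norm_num) u).2 hu
  obtain ⟨a, b⟩ := u
  obtain ⟨ha1, ha2⟩ : -1 ≤ a ∧ a ≤ 1 := by constructor <;> nlinarith
  obtain ⟨hb1, hb2⟩ : -1 ≤ b ∧ b ≤ 1 := by constructor <;> nlinarith
  interval_cases a <;> interval_cases b <;> simp at h <;> decide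

theorem two_dvd_sub_one_or_two_dvd_sub_sqrtd {w : ℤ[i]} (h : ¬π ∣ w) :
    2 ∣ w - 1 ∨ 2 ∣ w - sqrtd := by
  simp only [pi_dvd_iff, two_dvd_iff, re_sub, im_sub, re_one, im_one, re_sqrtd, im_sqrtd] at *
  omega

theorem four_dvd_sq_sub_one_of_two_dvd_sub_one {w : ℤ[i]} (h : 2 ∣ w - 1) :
    4 ∣ w ^ 2 - 1 := by
  obtain ⟨c, hc⟩ := h
  exact ⟨c + c ^ 2, by linear_combination (w + 1 + 2 * c) * hc⟩

theorem four_dvd_sq_add_one_of_two_dvd_sub_sqrtd {w : ℤ[i]} (h : 2 ∣ w - sqrtd) :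
    4 ∣ w ^ 2 + 1 := by
  obtain ⟨c, hc⟩ := h
  exact ⟨sqrtd * c + c ^ 2, by linear_combination (w + sqrtd + 2 * c) * hc + sqrtd_sq⟩

theorem four_dvd_sq_sub_one_or_four_dvd_sq_add_one {w : ℤ[i]} (h : ¬π ∣ w) :
    4 ∣ w ^ 2 - 1 ∨ 4 ∣ w ^ 2 + 1 :=
  (two_dvd_sub_one_or_two_dvd_sub_sqrtd h).imp four_dvd_sq_sub_one_of_two_dvd_sub_one
    four_dvd_sq_add_one_of_two_dvd_sub_sqrtd

theorem four_dvd_pow_four_sub_one {w : ℤ[i]} (h : ¬π ∣ w) : 4 ∣ w ^ 4 - 1 := by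
  rcases four_dvd_sq_sub_one_or_four_dvd_sq_add_one h with h' | h'
  · exact h'.trans ⟨w ^ 2 + 1, by ring⟩
  · exact h'.trans ⟨w ^ 2 - 1, by ring⟩

theorem four_dvd_sq_add_sq {x y : ℤ[i]} (hx : ¬π ∣ x) (hy : ¬π ∣ y) (hxy : ¬2 ∣ x - y) :
    4 ∣ x ^ 2 + y ^ 2 := by
  rcases two_dvd_sub_one_or_two_dvd_sub_sqrtd hx with hx' | hx' <;>
    rcases two_dvd_sub_one_or_two_dvd_sub_sqrtd hy with hy' | hy'
  · exact absurd (by simpa using dvd_sub hx' hy') hxy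
  · simpa using dvd_add (four_dvd_sq_sub_one_of_two_dvd_sub_one hx')
      (four_dvd_sq_add_one_of_two_dvd_sub_sqrtd hy')
  · simpa [add_comm] using dvd_add (four_dvd_sq_add_one_of_two_dvd_sub_sqrtd hx')
      (four_dvd_sq_sub_one_of_two_dvd_sub_one hy')
  · exact absurd (by simpa using dvd_sub hx' hy') hxy

theorem not_pi_dvd_of_sub_pow_four_eq {x y z : ℤ[i]} (hxy : IsCoprime x y)
    (h : x ^ 4 - y ^ 4 = sqrtd * z ^ 2) : ¬π ∣ x := by
  rintro ⟨c, rfl⟩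
  have hy : ¬π ∣ y := fun hy =>
    prime_pi.not_isUnit (hxy.isUnit_of_dvd' (dvd_mul_right _ _) hy)
  have hz : ¬π ∣ z := fun hz => hy <| prime_pi.dvd_of_dvd_pow (n := 4) <| by
    rw [show y ^ 4 = (π * c) ^ 4 - sqrtd * z ^ 2 by linear_combination -h]
    exact dvd_sub (dvd_pow (dvd_mul_right π c) four_ne_zero)
      (dvd_mul_of_dvd_right (dvd_pow hz two_ne_zero) _)
  obtain ⟨k, hk⟩ := four_dvd_pow_four_sub_one hy
  have hpi4 : π ^ 4 = -4 := by decide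
  -- the equation now reads `-1 ≡ ±i (mod 4)`
  rcases four_dvd_sq_sub_one_or_four_dvd_sq_add_one hz with ⟨t, ht⟩ | ⟨t, ht⟩
  · have : 4 ∣ 1 + sqrtd := ⟨-c ^ 4 - k - sqrtd * t, by
      linear_combination -h - hk - sqrtd * ht + c ^ 4 * hpi4⟩
    simp [four_dvd_iff] at this
  · have : 4 ∣ 1 - sqrtd := ⟨-c ^ 4 - k - sqrtd * t, by
      linear_combination -h - hk - sqrtd * ht + c ^ 4 * hpi4⟩
    simp [four_dvd_iff] at this

theorem not_two_dvd_sub_or_not_two_dvd_sub_sqrtd_mul (x : ℤ[i]) {y : ℤ[i]} (hy : ¬π ∣ y) :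
    ¬2 ∣ x - y ∨ ¬2 ∣ x - sqrtd * y := by
  simp only [pi_dvd_iff, two_dvd_iff, re_sub, im_sub, re_mul, im_mul, re_sqrtd, im_sqrtd] at *
  omega

theorem two_dvd_pi_mul {c : ℤ[i]} (h : π ∣ c) : 2 ∣ π * c := by
  obtain ⟨d, rfl⟩ := h
  exact ⟨sqrtd * d, by linear_combination d * pi_sq⟩

theorem exists_pi_mul_of_not_two_dvd_sub {x y : ℤ[i]} (hx : ¬π ∣ x) (hy : ¬π ∣ y)
    (hxy : ¬2 ∣ x - y) : ∃ e f, x + y = π * e ∧ x - y = π * f ∧ ¬π ∣ e ∧ ¬π ∣ f := by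
  obtain ⟨⟨e, he⟩, ⟨f, hf⟩⟩ : π ∣ x + y ∧ π ∣ x - y := by
    simp only [pi_dvd_iff, re_add, im_add, re_sub, im_sub] at *
    omega
  refine ⟨e, f, he, hf, fun h => hxy ?_, fun h => hxy (hf ▸ two_dvd_pi_mul h)⟩
  convert dvd_sub (he ▸ two_dvd_pi_mul h) (dvd_mul_right 2 y) using 1
  ring

theorem isCoprime_of_add_eq_pi_mul {x y e f : ℤ[i]} (hxy : IsCoprime x y) (he : x + y = π * e)
    (hf : x - y = π * f) (hf' : ¬π ∣ f) : IsCoprime e f := by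
  obtain ⟨a, b, hab⟩ := hxy
  obtain ⟨s, t, hst⟩ := prime_pi.coprime_iff_not_dvd.2 hf'
  -- `2 = -i π²`, so `π` lies in the ideal `(e, f)`
  have hpi : sqrtd * (a + b) * e + sqrtd * (a - b) * f = π := by
    refine mul_left_cancel₀ prime_pi.ne_zero ?_
    linear_combination -(sqrtd * (a + b)) * he - sqrtd * (a - b) * hf + 2 * sqrtd * hab - pi_sq
  exact ⟨s * (sqrtd * (a + b)), s * (sqrtd * (a - b)) + t, by linear_combination s * hpi + hst⟩

theorem sq_add_sq_eq {x y e f : ℤ[i]} (he : x + y = π * e) (hf : x - y = π * f) :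
    x ^ 2 + y ^ 2 = sqrtd * (e ^ 2 + f ^ 2) := by
  refine mul_left_cancel₀ two_ne_zero ?_
  linear_combination (x + y + π * e) * he + (x - y + π * f) * hf + (e ^ 2 + f ^ 2) * pi_sq

theorem sub_pow_four_eq {x y e f : ℤ[i]} (he : x + y = π * e) (hf : x - y = π * f) :
    x ^ 4 - y ^ 4 = π ^ 2 * (sqrtd * (e * f * (e ^ 2 + f ^ 2))) := by
  linear_combination (x - y) * (x ^ 2 + y ^ 2) * he + π * e * (x ^ 2 + y ^ 2) * hf +
    π ^ 2 * e * f * sq_add_sq_eq he hf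

theorem natAbs_norm_lt_of_associated {z c s : ℤ[i]} (hz : z ≠ 0) (hc : c ≠ 0)
    (h : Associated (z ^ 2) (2 * c * s ^ 2)) : (norm s).natAbs < (norm z).natAbs := by
  have hn := norm_eq_of_associated (by norm_num) h
  simp only [norm_mul, sq] at hn
  have h2 : norm (2 : ℤ[i]) = 4 := by decide
  rw [h2] at hn
  have hz' := norm_pos.2 hz
  have hc' : 1 ≤ norm c := norm_pos.2 hc
  refine Int.natAbs_lt_natAbs_of_nonneg_of_lt (norm_nonneg s) ?_
  by_contra! hle
  nlinarith [mul_self_le_mul_self hz'.le hle,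
    mul_le_mul_of_nonneg_right hc' (mul_self_nonneg (norm s))]

theorem associated_sq_add_sq_sub_pow_four {e f g h : ℤ[i]} {a b : ℤ[i]ˣ} (hg : ¬π ∣ g)
    (hh : ¬π ∣ h) (he : g ^ 2 * a = e) (hf : h ^ 2 * b = f) (h4 : 4 ∣ e ^ 2 + f ^ 2) :
    Associated (e ^ 2 + f ^ 2) (g ^ 4 - h ^ 4) := by
  subst he hf
  obtain ⟨k, hk⟩ := four_dvd_pow_four_sub_one hg
  obtain ⟨l, hl⟩ := four_dvd_pow_four_sub_one hh
  obtain ⟨m, hm⟩ := h4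
  have h42 : ¬4 ∣ (2 : ℤ[i]) := by simp [four_dvd_iff]
  rcases sq_eq_one_or_sq_eq_neg_one_of_isUnit a.isUnit with ha | ha <;>
    rcases sq_eq_one_or_sq_eq_neg_one_of_isUnit b.isUnit with hb | hb
  · exact absurd ⟨m - k - l, by
      linear_combination hm - hk - hl - g ^ 4 * ha - h ^ 4 * hb⟩ h42
  · exact .of_eq (by linear_combination g ^ 4 * ha + h ^ 4 * hb)
  · exact Associated.neg_right_iff.1 (.of_eq (by linear_combination g ^ 4 * ha + h ^ 4 * hb))
  · exact absurd ⟨-m - k - l, by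
      linear_combination -hm - hk - hl + g ^ 4 * ha + h ^ 4 * hb⟩ h42

/-- Solutions up to units, with `x, y` odd and coprime: the class closed under the descent. -/
structure IsOddSolution (x y z : ℤ[i]) : Prop where
  not_pi_dvd_left : ¬π ∣ x
  not_pi_dvd_right : ¬π ∣ y
  isCoprime : IsCoprime x y
  ne_zero : z ≠ 0
  associated : Associated (z ^ 2) (x ^ 4 - y ^ 4)

namespace IsOddSolution

variable {x y z : ℤ[i]}

theorem sqrtd_mul_right (hs : IsOddSolution x y z) : IsOddSolution x (sqrtd * y) z where
  not_pi_dvd_left := hs.not_pi_dvd_left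
  not_pi_dvd_right := isUnit_sqrtd.dvd_mul_left.not.2 hs.not_pi_dvd_right
  isCoprime := (isCoprime_mul_unit_left_right isUnit_sqrtd x y).2 hs.isCoprime
  ne_zero := hs.ne_zero
  associated := by
    convert hs.associated using 1
    linear_combination -y ^ 4 * (sqrtd ^ 2 - 1) * sqrtd_sq

theorem exists_associated_pi_sq_mul (hs : IsOddSolution x y z) (hxy : ¬2 ∣ x - y) :
    ∃ e f, ¬π ∣ e ∧ ¬π ∣ f ∧ IsCoprime e f ∧ 4 ∣ e ^ 2 + f ^ 2 ∧
      Associated (z ^ 2) (π ^ 2 * (e * f * (e ^ 2 + f ^ 2))) := by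
  obtain ⟨e, f, he, hf, he', hf'⟩ :=
    exists_pi_mul_of_not_two_dvd_sub hs.not_pi_dvd_left hs.not_pi_dvd_right hxy
  refine ⟨e, f, he', hf', isCoprime_of_add_eq_pi_mul hs.isCoprime he hf hf', ?_, ?_⟩
  · have := four_dvd_sq_add_sq hs.not_pi_dvd_left hs.not_pi_dvd_right hxy
    rw [sq_add_sq_eq he hf] at this
    exact isUnit_sqrtd.dvd_mul_left.1 this
  · refine hs.associated.trans ?_
    rw [sub_pow_four_eq he hf]
    exact (associated_unit_mul_left _ _ isUnit_sqrtd).mul_left _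

theorem exists_lt_of_not_two_dvd_sub (hs : IsOddSolution x y z) (hxy : ¬2 ∣ x - y) :
    ∃ x' y' z', IsOddSolution x' y' z' ∧ (norm z').natAbs < (norm z).natAbs := by
  obtain ⟨e, f, he', hf', hef, h4, hz⟩ := hs.exists_associated_pi_sq_mul hxy
  obtain ⟨w, hw⟩ := exists_associated_sq_of_associated_prime_sq_mul prime_pi hz
  obtain ⟨⟨g, a, hg⟩, ⟨h, b, hh⟩, s, hs'⟩ :=
    hef.exists_associated_sq_of_associated_sq_mul_sq_add_sq hw
  have hg' : g ∣ e := hg ▸ dvd_mul_of_dvd_left (dvd_pow_self g two_ne_zero) _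
  have hh' : h ∣ f := hh ▸ dvd_mul_of_dvd_left (dvd_pow_self h two_ne_zero) _
  have hne : e * f * (e ^ 2 + f ^ 2) ≠ 0 :=
    right_ne_zero_of_mul (hz.ne_zero_iff.1 (pow_ne_zero 2 hs.ne_zero))
  have hg_odd : ¬π ∣ g := fun hpi => he' (hpi.trans hg')
  have hh_odd : ¬π ∣ h := fun hpi => hf' (hpi.trans hh')
  have hsol : IsOddSolution g h s :=
    { not_pi_dvd_left := hg_odd
      not_pi_dvd_right := hh_odd
      isCoprime := (hef.of_isCoprime_of_dvd_left hg').of_isCoprime_of_dvd_right hh'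
      ne_zero := fun hs0 => right_ne_zero_of_mul hne (hs'.eq_zero_iff.1 (by simp [hs0]))
      associated := hs'.trans (associated_sq_add_sq_sub_pow_four hg_odd hh_odd hg hh h4) }
  refine ⟨g, h, s, hsol,
    natAbs_norm_lt_of_associated hs.ne_zero (left_ne_zero_of_mul hne) (hz.trans ?_)⟩
  rw [pi_sq, show 2 * sqrtd * (e * f * (e ^ 2 + f ^ 2)) =
    sqrtd * (2 * (e * f) * (e ^ 2 + f ^ 2)) by ring]
  exact (associated_unit_mul_left _ _ isUnit_sqrtd).trans (hs'.symm.mul_left _)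

theorem exists_lt (hs : IsOddSolution x y z) :
    ∃ x' y' z', IsOddSolution x' y' z' ∧ (norm z').natAbs < (norm z).natAbs := by
  rcases not_two_dvd_sub_or_not_two_dvd_sub_sqrtd_mul x hs.not_pi_dvd_right with h | h
  · exact hs.exists_lt_of_not_two_dvd_sub h
  · exact hs.sqrtd_mul_right.exists_lt_of_not_two_dvd_sub h

end IsOddSolution

theorem not_isOddSolution (x y z : ℤ[i]) : ¬IsOddSolution x y z := by
  induction hn : (norm z).natAbs using Nat.strong_induction_on generalizing x y z with
  | _ n ih =>
    intro hs
    obtain ⟨x', y', z', hs', hlt⟩ := hs.exists_lt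
    exact ih _ (hn ▸ hlt) x' y' z' rfl hs'

end GaussianInt

open GaussianInt

/-- The Diophantine equation `x⁴ - y⁴ = i·z²` has only trivial solutions in the
Gaussian integers `ℤ[i]`, where `i = Zsqrtd.sqrtd` is the square root of `-1`. -/
theorem stmt_0 :
    ¬ ∃ x y z : GaussianInt, x * y * z ≠ 0 ∧
      x ^ 4 - y ^ 4 = Zsqrtd.sqrtd * z ^ 2 := by
  rintro ⟨x, y, z, hxyz, h⟩
  obtain ⟨x, y, z, hxy, hz, h⟩ := exists_isCoprime_sub_pow_four_eq_mul_sq isUnit_sqrtd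
    (left_ne_zero_of_mul (left_ne_zero_of_mul hxyz)) (right_ne_zero_of_mul hxyz) h
  have hy := not_pi_dvd_of_sub_pow_four_eq hxy.symm (z := sqrtd * z)
    (by linear_combination -h - z ^ 2 * sqrtd * sqrtd_sq)
  exact not_isOddSolution x y z ⟨not_pi_dvd_of_sub_pow_four_eq hxy h, hy, hxy, hz,
    ⟨isUnit_sqrtd.unit, by rw [h, IsUnit.unit_spec, mul_comm]⟩⟩
end

section
/- There are no elements s, t of ℚ(i) with s·t ≠ 0 satisfying s^4 - 1 = t^2. -/
/-- `ℚ(i)`, the field of Gaussian rationals, realized as the fraction field of `ℤ[i]`. -/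
local notation "K" => FractionRing GaussianInt

/-- The image of `i` in `ℚ(i)`. -/
local notation "I" => (algebraMap GaussianInt (FractionRing GaussianInt) Zsqrtd.sqrtd)

/-!
Clearing denominators reduces the claim to the nonexistence of a coprime solution of
`a⁴ - b⁴ = c²` in `ℤ[i]` with `abc ≠ 0`. Writing `λ = 1 + i`, such a solution yields one of
`γ² = e₁ α⁴ + e₂ λ^(4n) β⁴` with units `e₁, e₂` and `α, β, γ` prime to `λ` (when `c` is even,
after splitting `(a² - b²)/2 · (a² + b²)/2 = (c/2)²` into coprime squares). For `n = 0` this is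
impossible mod 4: odd fourth powers are `≡ 1`, odd squares `≡ ±1`, and no sum of two units is
`≡ ±1`. For `n > 0` the same congruence forces `e₁ = u²`, where `γ ≡ u (mod 2)`; the two halves
of `(u⁻¹γ - α²)(u⁻¹γ + α²)` are coprime, hence each a unit times a fourth power, and their
difference `α²` gives a solution at level `n - 1` with `α` in the role of `γ`.
-/

open Zsqrtd

theorem Prime.pow_dvd_or_pow_dvd_of_isCoprime {R : Type*} [CommRing R] [IsDomain R] {p x y : R}
    (hp : Prime p) (hxy : IsCoprime x y) {k : ℕ} (h : p ^ k ∣ x * y) :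
    p ^ k ∣ x ∨ p ^ k ∣ y := by
  rcases k.eq_zero_or_pos with rfl | hk
  · simp
  rcases hp.dvd_or_dvd ((dvd_pow_self p hk.ne').trans h) with hx | hy
  · have hy : ¬ p ∣ y := fun hy => hp.not_isUnit (hxy.isUnit_of_dvd' hx hy)
    exact .inl (hp.pow_dvd_of_dvd_mul_right k hy h)
  · have hx : ¬ p ∣ x := fun hx => hp.not_isUnit (hxy.isUnit_of_dvd' hx hy)
    exact .inr (hp.pow_dvd_of_dvd_mul_left k hx h)

theorem IsFractionRing.exists_pow_four_sub_pow_four_eq_sq {R F : Type*} [CommRing R] [IsDomain R]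
    [IsPrincipalIdealRing R] [Field F] [Algebra R F] [IsFractionRing R F] {s t : F}
    (hs : s ≠ 0) (ht : t ≠ 0) (h : s ^ 4 - 1 = t ^ 2) :
    ∃ a b c : R, IsCoprime a b ∧ a ≠ 0 ∧ b ≠ 0 ∧ c ≠ 0 ∧ a ^ 4 - b ^ 4 = c ^ 2 := by
  obtain ⟨a, b, hab, rfl⟩ := IsFractionRing.exists_reduced_fraction R s
  have hb : algebraMap R F b ≠ 0 := IsFractionRing.to_map_ne_zero_of_mem_nonZeroDivisors b.2
  rw [IsFractionRing.mk'_eq_div] at hs h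
  have hsq : (t * algebraMap R F b ^ 2) ^ 2 = algebraMap R F (a ^ 4 - b ^ 4) := by
    rw [mul_pow, ← h, map_sub, map_pow, map_pow]
    field_simp
  obtain ⟨c, hc⟩ := IsIntegrallyClosed.exists_algebraMap_eq_of_isIntegral_pow two_pos
    (hsq ▸ isIntegral_algebraMap)
  refine ⟨a, b, c, hab.isCoprime, fun ha => hs (by simp [ha]), nonZeroDivisors.coe_ne_zero b,
    fun hc0 => ?_, IsFractionRing.injective R F (by rw [← hsq, ← hc, map_pow])⟩
  rw [hc0, map_zero, eq_comm] at hc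
  exact mul_ne_zero ht (pow_ne_zero 2 hb) hc

namespace GaussianInt

def oneAddI : GaussianInt := ⟨1, 1⟩

theorem oneAddI_pow_four : oneAddI ^ 4 = -4 := by decide

theorem oneAddI_dvd_iff {z : GaussianInt} : oneAddI ∣ z ↔ 2 ∣ z.re + z.im := by
  constructor
  · rintro ⟨w, rfl⟩
    exact ⟨w.re, by simp [oneAddI]; ring⟩
  · rintro ⟨k, hk⟩
    exact ⟨⟨k, k - z.re⟩, by ext <;> simp [oneAddI]; omega⟩

theorem isUnit_iff {u : GaussianInt} :
    IsUnit u ↔ u = 1 ∨ u = -1 ∨ u = sqrtd ∨ u = -sqrtd := by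
  refine ⟨fun hu => ?_, ?_⟩
  · have hnorm : u.re * u.re + u.im * u.im = 1 := by
      simpa [Zsqrtd.norm_def] using (norm_eq_one_iff' (by norm_num) u).mpr hu
    have hre : -1 ≤ u.re ∧ u.re ≤ 1 := by constructor <;> nlinarith [mul_self_nonneg u.im]
    have him : -1 ≤ u.im ∧ u.im ≤ 1 := by constructor <;> nlinarith [mul_self_nonneg u.re]
    rcases (by omega : u.re = -1 ∨ u.re = 0 ∨ u.re = 1) with h | h | h <;>
      rcases (by omega : u.im = -1 ∨ u.im = 0 ∨ u.im = 1) with h' | h' | h' <;>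
      simp_all [Zsqrtd.ext_iff]
  · rintro (rfl | rfl | rfl | rfl) <;> exact (norm_eq_one_iff' (by norm_num) _).mp (by decide)

theorem prime_oneAddI : Prime oneAddI := by
  refine Irreducible.prime ⟨fun hu => ?_, fun a b hab => ?_⟩
  · simp [isUnit_iff, oneAddI, Zsqrtd.ext_iff] at hu
  · have hnorm : 2 = a.norm * b.norm := by rw [← Zsqrtd.norm_mul, ← hab]; decide
    simpa only [isUnit_iff_norm_isUnit] using Int.prime_two.irreducible.isUnit_or_isUnit hnorm

theorem four_dvd_iff_s7 {z : GaussianInt} : 4 ∣ z ↔ 4 ∣ z.re ∧ 4 ∣ z.im := by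
  simpa using Zsqrtd.intCast_dvd (d := -1) 4 z

theorem eq_of_four_dvd_sub {e e' : GaussianInt} (he : IsUnit e) (he' : IsUnit e')
    (h : 4 ∣ e - e') : e = e' := by
  rw [four_dvd_iff_s7] at h
  rcases isUnit_iff.mp he with rfl | rfl | rfl | rfl <;>
    rcases isUnit_iff.mp he' with rfl | rfl | rfl | rfl <;> revert h <;> decide

theorem not_four_dvd_add_sub {e₁ e₂ e₃ : GaussianInt} (he₁ : IsUnit e₁) (he₂ : IsUnit e₂)
    (he₃ : IsUnit e₃) : ¬ 4 ∣ e₁ + e₂ - e₃ := by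
  rw [four_dvd_iff_s7]
  rcases isUnit_iff.mp he₁ with rfl | rfl | rfl | rfl <;>
    rcases isUnit_iff.mp he₂ with rfl | rfl | rfl | rfl <;>
    rcases isUnit_iff.mp he₃ with rfl | rfl | rfl | rfl <;> decide

theorem exists_eq_add_two_mul {z : GaussianInt} (hz : ¬ oneAddI ∣ z) :
    ∃ u w, (u = 1 ∨ u = sqrtd) ∧ z = u + 2 * w := by
  rw [oneAddI_dvd_iff] at hz
  rcases Int.even_or_odd z.im with ⟨n, hn⟩ | ⟨n, hn⟩
  · exact ⟨1, ⟨(z.re - 1) / 2, n⟩, .inl rfl, by ext <;> simp <;> omega⟩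
  · exact ⟨sqrtd, ⟨z.re / 2, n⟩, .inr rfl, by ext <;> simp <;> omega⟩

theorem four_dvd_pow_four_sub_one_s7 {z : GaussianInt} (hz : ¬ oneAddI ∣ z) : 4 ∣ z ^ 4 - 1 := by
  obtain ⟨u, w, hu, rfl⟩ := exists_eq_add_two_mul hz
  have hu4 : u ^ 4 = 1 := by rcases hu with rfl | rfl <;> decide
  exact ⟨2 * u ^ 3 * w + 6 * u ^ 2 * w ^ 2 + 8 * u * w ^ 3 + 4 * w ^ 4, by linear_combination hu4⟩

theorem two_dvd_sq_sub_one {z : GaussianInt} (hz : ¬ oneAddI ∣ z) : 2 ∣ z ^ 2 - 1 := by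
  obtain ⟨u, w, hu, rfl⟩ := exists_eq_add_two_mul hz
  obtain ⟨k, hk⟩ : ∃ k, u ^ 2 - 1 = 2 * k := by
    rcases hu with rfl | rfl
    exacts [⟨0, by decide⟩, ⟨-1, by decide⟩]
  exact ⟨k + 2 * u * w + 2 * w ^ 2, by linear_combination hk⟩

def IsOddSolution_s7 (n : ℕ) (α β γ : GaussianInt) : Prop :=
  ¬ oneAddI ∣ α ∧ ¬ oneAddI ∣ β ∧ ¬ oneAddI ∣ γ ∧ IsCoprime α β ∧
    ∃ e₁ e₂, IsUnit e₁ ∧ IsUnit e₂ ∧ γ ^ 2 = e₁ * α ^ 4 + e₂ * oneAddI ^ (4 * n) * β ^ 4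

variable {n : ℕ} {α β γ : GaussianInt}

theorem not_isOddSolution_zero : ¬ IsOddSolution_s7 0 α β γ := by
  rintro ⟨hα, hβ, hγ, -, e₁, e₂, he₁, he₂, h⟩
  obtain ⟨u, w, hu, rfl⟩ := exists_eq_add_two_mul hγ
  have hu2 : IsUnit (u ^ 2) := by rcases hu with rfl | rfl <;> simp [isUnit_iff]
  refine not_four_dvd_add_sub he₁ he₂ hu2 ?_
  have h4 : e₁ + e₂ - u ^ 2 = 4 * (u * w + w ^ 2) - e₁ * (α ^ 4 - 1) - e₂ * (β ^ 4 - 1) := by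
    linear_combination -h
  rw [h4]
  exact dvd_sub (dvd_sub (dvd_mul_right _ _) ((four_dvd_pow_four_sub_one_s7 hα).mul_left _))
    ((four_dvd_pow_four_sub_one_s7 hβ).mul_left _)

theorem IsOddSolution_s7.isCoprime_left (h : IsOddSolution_s7 n α β γ) : IsCoprime α γ := by
  obtain ⟨hα, -, -, hαβ, e₁, e₂, -, he₂, h⟩ := h
  have hα' : IsCoprime α oneAddI := ((prime_oneAddI.coprime_iff_not_dvd).mpr hα).symm
  have hαE : IsCoprime α (e₂ * oneAddI ^ (4 * n) * β ^ 4) :=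
    ((isCoprime_mul_unit_left_right he₂ _ _).mpr hα'.pow_right).mul_right hαβ.pow_right
  rw [← IsCoprime.pow_right_iff two_pos, h]
  rw [show e₁ * α ^ 4 + _ = e₂ * oneAddI ^ (4 * n) * β ^ 4 + α * (e₁ * α ^ 3) by ring]
  exact hαE.add_mul_left_right _

theorem exists_unit_mul_pow_four_of_mul_eq {X Y e : GaussianInt} (hXY : IsCoprime X Y)
    (he : IsUnit e) (hβ : ¬ oneAddI ∣ β) (h : X * Y = e * β ^ 4) :
    ∃ u f, IsUnit u ∧ ¬ oneAddI ∣ f ∧ X = u * f ^ 4 := by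
  obtain ⟨f, v, hf⟩ := exists_associated_pow_of_associated_pow_mul hXY
    (h ▸ associated_unit_mul_right _ _ he)
  refine ⟨v, f, v.isUnit, fun hdvd => hβ ?_, by rw [← hf, mul_comm]⟩
  have : oneAddI ∣ e * β ^ 4 := h ▸ (hf ▸ (dvd_pow hdvd four_ne_zero).mul_right _).mul_right _
  exact prime_oneAddI.dvd_of_dvd_pow ((he.dvd_mul_left).mp this)

theorem isOddSolution_of_mul_eq_of_pow_dvd {X Y e s t : GaussianInt} (hα : ¬ oneAddI ∣ α)
    (hβ : ¬ oneAddI ∣ β) (he : IsUnit e) (hs : IsUnit s) (ht : IsUnit t) (hXY : IsCoprime X Y)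
    (h : X * Y = e * oneAddI ^ (4 * n) * β ^ 4) (hY : oneAddI ^ (4 * n) ∣ Y)
    (hα2 : α ^ 2 = s * X + t * Y) : ∃ f g, IsOddSolution_s7 n f g α := by
  obtain ⟨Y₀, rfl⟩ := hY
  have hXY₀ : X * Y₀ = e * β ^ 4 := by
    refine mul_left_cancel₀ (pow_ne_zero (4 * n) prime_oneAddI.ne_zero) ?_
    linear_combination h
  have hcop : IsCoprime X Y₀ := hXY.of_mul_right_right
  obtain ⟨u, f, hu, hf, rfl⟩ := exists_unit_mul_pow_four_of_mul_eq hcop he hβ hXY₀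
  obtain ⟨v, g, hv, hg, rfl⟩ :=
    exists_unit_mul_pow_four_of_mul_eq hcop.symm he hβ (by rw [mul_comm, hXY₀])
  have hfg : IsCoprime f g :=
    (IsCoprime.pow_iff four_pos four_pos).mp hcop.of_mul_left_right.of_mul_right_right
  exact ⟨f, g, hf, hg, hα, hfg, s * u, t * v, hs.mul hu, ht.mul hv, by rw [hα2]; ring⟩

theorem exists_isOddSolution_of_mul_eq {X Y e : GaussianInt} (hα : ¬ oneAddI ∣ α)
    (hβ : ¬ oneAddI ∣ β) (he : IsUnit e) (hXY : IsCoprime X Y)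
    (h : X * Y = e * oneAddI ^ (4 * n) * β ^ 4) (hα2 : α ^ 2 = Y - X) :
    ∃ f g, IsOddSolution_s7 n f g α := by
  rcases prime_oneAddI.pow_dvd_or_pow_dvd_of_isCoprime hXY
    (h ▸ (dvd_mul_left (oneAddI ^ (4 * n)) e).mul_right _) with hX | hY
  · exact isOddSolution_of_mul_eq_of_pow_dvd hα hβ he isUnit_one isUnit_one.neg hXY.symm
      (by rw [mul_comm, h]) hX (by rw [hα2]; ring)
  · exact isOddSolution_of_mul_eq_of_pow_dvd hα hβ he isUnit_one.neg isUnit_one hXY h hY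
      (by rw [hα2]; ring)

theorem IsOddSolution_s7.exists_mul_eq (hsol : IsOddSolution_s7 (n + 1) α β γ) :
    ∃ X Y e, IsUnit e ∧ IsCoprime X Y ∧ X * Y = e * oneAddI ^ (4 * n) * β ^ 4 ∧
      α ^ 2 = Y - X := by
  have hαγ := hsol.isCoprime_left
  obtain ⟨hα, -, hγ, -, e₁, e₂, he₁, he₂, h⟩ := hsol
  obtain ⟨u, w, hu, rfl⟩ := exists_eq_add_two_mul hγ
  have hu4 : u ^ 4 = 1 := by rcases hu with rfl | rfl <;> decide
  have hu : IsUnit u := .of_pow_eq_one hu4 four_ne_zero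
  have hpow : oneAddI ^ (4 * (n + 1)) = -4 * oneAddI ^ (4 * n) := by
    rw [mul_add, pow_add, oneAddI_pow_four]
    ring
  rw [hpow] at h
  obtain ⟨k, hk⟩ := four_dvd_pow_four_sub_one_s7 hα
  obtain rfl : e₁ = u ^ 2 := eq_of_four_dvd_sub he₁ (hu.pow 2)
    ⟨u * w + w ^ 2 - e₁ * k + e₂ * oneAddI ^ (4 * n) * β ^ 4, by linear_combination -h - e₁ * hk⟩
  -- With `u³ = u⁻¹`: `u⁻¹ γ ≡ 1 ≡ α² (mod 2)`, so both factors of `(u⁻¹ γ)² - α⁴` are even.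
  obtain ⟨m, hm⟩ := two_dvd_sq_sub_one hα
  set X := u ^ 3 * w - m
  have hX : 2 * X = u ^ 3 * (u + 2 * w) - α ^ 2 := by linear_combination hm - hu4
  refine ⟨X, X + α ^ 2, -(u ^ 2 * e₂), ((hu.pow 2).mul he₂).neg, ?_, ?_, by ring⟩
  · obtain ⟨p, q, hpq⟩ := hαγ.pow_left (m := 2)
    exact ⟨q * u - p, p + q * u, by linear_combination hpq + q * u * hm + 2 * q * w * hu4⟩
  · refine mul_left_cancel₀ (by decide : (4 : GaussianInt) ≠ 0) ?_
    linear_combination u ^ 6 * h + (2 * X + u ^ 3 * (u + 2 * w) + α ^ 2) * hX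
      + ((u ^ 4 + 1) * α ^ 4 - 4 * u ^ 2 * e₂ * oneAddI ^ (4 * n) * β ^ 4) * hu4

theorem IsOddSolution_s7.descent (hsol : IsOddSolution_s7 (n + 1) α β γ) :
    ∃ f g, IsOddSolution_s7 n f g α := by
  obtain ⟨X, Y, e, he, hXY, h, hα2⟩ := hsol.exists_mul_eq
  exact exists_isOddSolution_of_mul_eq hsol.1 hsol.2.1 he hXY h hα2

theorem not_isOddSolution_s7 (n : ℕ) : ¬ IsOddSolution_s7 n α β γ := by
  induction n generalizing α β γ with
  | zero => exact not_isOddSolution_zero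
  | succ n ih =>
    intro hsol
    obtain ⟨f, g, hfg⟩ := hsol.descent
    exact ih hfg

theorem sq_ne_of_isCoprime {e₁ e₂ x y : GaussianInt} (he₁ : IsUnit e₁) (he₂ : IsUnit e₂)
    (hx : x ≠ 0) (hy : y ≠ 0) (hxy : IsCoprime x y) (hγ : ¬ oneAddI ∣ γ) :
    γ ^ 2 ≠ e₁ * x ^ 4 + e₂ * y ^ 4 := by
  wlog hx' : ¬ oneAddI ∣ x generalizing e₁ e₂ x y
  · have hy' : ¬ oneAddI ∣ y := fun hy' => prime_oneAddI.not_isUnit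
      (hxy.isUnit_of_dvd' (not_not.mp hx') hy')
    rw [add_comm]
    exact this he₂ he₁ hy hx hxy.symm hy'
  obtain ⟨m, y₀, hy₀, rfl⟩ := WfDvdMonoid.max_power_factor hy prime_oneAddI.irreducible
  intro h
  exact not_isOddSolution_s7 m
    ⟨hx', hy₀, hγ, hxy.of_mul_right_right, e₁, e₂, he₁, he₂, by rw [h]; ring⟩

theorem exists_eq_of_pow_four_sub_pow_four_eq_sq {a b c : GaussianInt} (ha : ¬ oneAddI ∣ a)
    (hb : ¬ oneAddI ∣ b) (hab : IsCoprime a b) (hc : c ≠ 0) (h : a ^ 4 - b ^ 4 = c ^ 2) :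
    ∃ e₁ e₂ x y, IsUnit e₁ ∧ IsUnit e₂ ∧ x ≠ 0 ∧ y ≠ 0 ∧ IsCoprime x y ∧
      (a * b) ^ 2 = e₁ * x ^ 4 + e₂ * y ^ 4 := by
  obtain ⟨ma, hma⟩ := two_dvd_sq_sub_one ha
  obtain ⟨mb, hmb⟩ := two_dvd_sq_sub_one hb
  set P := ma - mb
  set Q := ma + mb + 1
  have ha2 : a ^ 2 = P + Q := by linear_combination hma
  have hb2 : b ^ 2 = Q - P := by linear_combination hmb
  have hPQ : IsCoprime P Q := by
    obtain ⟨p, q, hpq⟩ := hab.pow (m := 2) (n := 2)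
    exact ⟨p - q, p + q, by linear_combination hpq - p * ha2 - q * hb2⟩
  have hc2 : c ^ 2 = 2 ^ 2 * (P * Q) := by
    linear_combination -h + (a ^ 2 + P + Q) * ha2 - (b ^ 2 + Q - P) * hb2
  obtain ⟨d, rfl⟩ : 2 ∣ c := by
    rw [← IsIntegrallyClosed.pow_dvd_pow_iff two_ne_zero, hc2]
    exact dvd_mul_right _ _
  have hd : P * Q = d ^ 2 :=
    (mul_left_cancel₀ (pow_ne_zero 2 two_ne_zero) (by rw [← hc2, mul_pow])).symm
  obtain ⟨r, u, hr⟩ := exists_associated_pow_of_mul_eq_pow' hPQ hd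
  obtain ⟨s, v, hs⟩ := exists_associated_pow_of_mul_eq_pow' hPQ.symm (by rw [mul_comm, hd])
  have hrs : IsCoprime r s := by
    rw [← hr, ← hs] at hPQ
    exact (IsCoprime.pow_iff two_pos two_pos).mp hPQ.of_mul_left_left.of_mul_right_left
  have hd0 : d ≠ 0 := right_ne_zero_of_mul hc
  refine ⟨v ^ 2, -u ^ 2, s, r, v.isUnit.pow 2, (u.isUnit.pow 2).neg, ?_, ?_, hrs.symm, ?_⟩
  · rintro rfl
    exact hd0 (pow_eq_zero_iff two_ne_zero |>.mp (by rw [← hd, ← hs]; ring))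
  · rintro rfl
    exact hd0 (pow_eq_zero_iff two_ne_zero |>.mp (by rw [← hd, ← hr]; ring))
  · linear_combination b ^ 2 * ha2 + (P + Q) * hb2 - (s ^ 2 * v + Q) * hs + (r ^ 2 * u + P) * hr

theorem pow_four_sub_pow_four_ne_sq {a b c : GaussianInt} (hab : IsCoprime a b) (ha : a ≠ 0)
    (hb : b ≠ 0) (hc : c ≠ 0) : a ^ 4 - b ^ 4 ≠ c ^ 2 := by
  intro h
  by_cases hc' : oneAddI ∣ c
  · have hdvd : oneAddI ∣ a ^ 4 - b ^ 4 := h ▸ dvd_pow hc' two_ne_zero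
    have hb' : ¬ oneAddI ∣ b := fun hb' => prime_oneAddI.not_isUnit (hab.isUnit_of_dvd'
      (prime_oneAddI.dvd_of_dvd_pow ((dvd_sub_left (dvd_pow hb' four_ne_zero)).mp hdvd)) hb')
    have ha' : ¬ oneAddI ∣ a := fun ha' =>
      hb' (prime_oneAddI.dvd_of_dvd_pow ((dvd_sub_right (dvd_pow ha' four_ne_zero)).mp hdvd))
    obtain ⟨e₁, e₂, x, y, he₁, he₂, hx, hy, hxy, hab'⟩ :=
      exists_eq_of_pow_four_sub_pow_four_eq_sq ha' hb' hab hc h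
    exact sq_ne_of_isCoprime he₁ he₂ hx hy hxy (prime_oneAddI.not_dvd_mul ha' hb') hab'
  · exact sq_ne_of_isCoprime isUnit_one isUnit_one.neg ha hb hab hc' (by rw [← h]; ring)

end GaussianInt

/-- The equation `s⁴ - 1 = t²` has no solutions in `ℚ(i)` with `s·t ≠ 0`. -/
theorem stmt_7 : ¬ ∃ s t : K, s * t ≠ 0 ∧ s ^ 4 - 1 = t ^ 2 := by
  rintro ⟨s, t, hst, h⟩
  obtain ⟨a, b, c, hab, ha, hb, hc, habc⟩ :=
    IsFractionRing.exists_pow_four_sub_pow_four_eq_sq (R := GaussianInt) (left_ne_zero_of_mul hst)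
      (right_ne_zero_of_mul hst) h
  exact GaussianInt.pow_four_sub_pow_four_ne_sq hab ha hb hc habc
end

section
/- If x, y, z ∈ ℚ(i) satisfy x^4 + y^4 = i·z^2 and xyz ≠ 0, then (x/y)^4 = 1 and (z/y^2)^2 = -2i. -/
/-- `ℚ(i)`, the field of Gaussian rationals, realized as the fraction field of `ℤ[i]`. -/
local notation "K" => FractionRing GaussianInt

/-- The image of `i` in `ℚ(i)`. -/
local notation "I" => (algebraMap GaussianInt (FractionRing GaussianInt) Zsqrtd.sqrtd)

local notation "ℤ[i]" => GaussianInt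

/-!
Clearing denominators and then a common factor reduces the statement to `a⁴ + b⁴ = i c²` with
`a, b ∈ ℤ[i]` coprime, where we show `a⁴ = b⁴`. Let `ϖ = 1 + i`, so `ϖ² = 2i` and `ϖ⁴ = -4`, and
call `w` odd when `ϖ ∤ w`; then `w² ≡ ±1` and `w⁴ ≡ 1 (mod 4)`. Congruences modulo 4 force `a, b`
odd and `c = ϖ c₁` with `c₁` odd and `a⁴ + b⁴ = -2 c₁²`, whence `c₁⁴ - (ab)⁴ = (c₁² + b⁴)²`.

It remains to see that `u⁴ - v⁴ = w²` with `u, v` odd and coprime forces `w = 0`. Replacing `v` by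
`iv` if needed, `4 ∣ u² - v²`; the coprime factors `m = (u² - v²)/4` and `g = (u² + v²)/2` of
`w² = 8mg` are then squares up to units, and `(uv)² = g² - 4m²` becomes a solution of
`ε (ϖⁿ x)⁴ + δ y⁴ = η z²` with units `ε, δ, η`, `n ≥ 1` and `x, y, z` odd. Such equations have no
solutions, by Hilbert's descent on `n`: modulo 4, `δ = θ² η` for a unit `θ`, and both factors of
`(z - θy²)(z + θy²) = η⁻¹ ε (ϖⁿ x)⁴` are `ϖ²` times cofactors with odd sum. For `n = 1` both
cofactors are odd, which is absurd; otherwise the odd cofactor and the other one divided by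
`ϖ⁴⁽ⁿ⁻¹⁾` are coprime with product a unit times `x⁴`, hence fourth powers up to units, and their
difference is a solution for `n - 1`.
-/

theorem four_dvd_sq_sub_sq_of_two_dvd_sub {R : Type*} [CommRing R] {a b : R} (h : 2 ∣ a - b) :
    4 ∣ a ^ 2 - b ^ 2 := by
  obtain ⟨k, hk⟩ := h
  exact ⟨k * (k + b), by linear_combination (a + b + 2 * k) * hk⟩

theorem Prime.pow_dvd_and_pow_dvd_of_dvd_sub {R : Type*} [CommRing R] [IsDomain R] {p : R}
    (hp : Prime p) {k : ℕ} {a b : R} (hsub : p ^ k ∣ a - b) (hmul : p ^ (2 * k) ∣ a * b) :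
    p ^ k ∣ a ∧ p ^ k ∣ b := by
  induction k generalizing a b with
  | zero => simp
  | succ k ih =>
    have hp_sub : p ∣ a - b := (dvd_pow_self p k.succ_ne_zero).trans hsub
    obtain ⟨⟨a, rfl⟩, ⟨b, rfl⟩⟩ : p ∣ a ∧ p ∣ b := by
      rcases hp.dvd_or_dvd ((dvd_pow_self p (by omega)).trans hmul) with ha | hb
      · exact ⟨ha, by simpa using ha.sub hp_sub⟩
      · exact ⟨by simpa using hb.add hp_sub, hb⟩
    have hsub' : p ^ k ∣ a - b := by
      rwa [← mul_sub, pow_succ', mul_dvd_mul_iff_left hp.ne_zero] at hsub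
    have hmul' : p ^ (2 * k) ∣ a * b := by
      rwa [mul_mul_mul_comm, ← sq, mul_add, mul_one, pow_add, mul_comm (p ^ _),
        mul_dvd_mul_iff_left (pow_ne_zero 2 hp.ne_zero)] at hmul
    obtain ⟨ha, hb⟩ := ih hsub' hmul'
    rw [pow_succ']
    exact ⟨mul_dvd_mul_left p ha, mul_dvd_mul_left p hb⟩

namespace GaussianQuartic

open Zsqrtd

def ϖ : ℤ[i] := ⟨1, 1⟩

theorem ϖ_sq : ϖ ^ 2 = 2 * sqrtd := by decide

theorem ϖ_pow_four : ϖ ^ 4 = -4 := by decide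

theorem sqrtd_sq : (sqrtd : ℤ[i]) ^ 2 = -1 := by decide

theorem isUnit_sqrtd : IsUnit (sqrtd : ℤ[i]) := .of_mul_eq_one (-sqrtd) (by decide)

theorem two_dvd_iff (w : ℤ[i]) : 2 ∣ w ↔ 2 ∣ w.re ∧ 2 ∣ w.im := by
  exact_mod_cast intCast_dvd 2 w

theorem four_dvd_iff (w : ℤ[i]) : 4 ∣ w ↔ 4 ∣ w.re ∧ 4 ∣ w.im := by
  exact_mod_cast intCast_dvd 4 w

theorem ϖ_dvd_iff (w : ℤ[i]) : ϖ ∣ w ↔ 2 ∣ w.re + w.im := by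
  constructor
  · rintro ⟨c, rfl⟩
    exact ⟨c.re, by simp [ϖ]; ring⟩
  · intro ⟨k, hk⟩
    exact ⟨⟨k, k - w.re⟩, by ext <;> simp [ϖ]; linarith⟩

theorem prime_ϖ : Prime ϖ := by
  refine ⟨by decide, fun h => ?_, fun a b hab => ?_⟩
  · simpa using (ϖ_dvd_iff 1).1 h.dvd
  · have hre_add_im :
        (a * b).re + (a * b).im = (a.re + a.im) * (b.re + b.im) - 2 * (a.im * b.im) := by
      simp; ring
    rw [ϖ_dvd_iff, hre_add_im, dvd_sub_left (dvd_mul_right _ _)] at hab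
    simpa only [ϖ_dvd_iff] using Int.prime_two.dvd_or_dvd hab

theorem ϖ_dvd_two : ϖ ∣ 2 := ⟨⟨1, -1⟩, by decide⟩

theorem ϖ_dvd_add {a b : ℤ[i]} (ha : ¬ϖ ∣ a) (hb : ¬ϖ ∣ b) : ϖ ∣ a + b := by
  rw [ϖ_dvd_iff] at *
  simp only [re_add, im_add]
  omega

theorem two_dvd_sub_one_or_sub_sqrtd {w : ℤ[i]} (hw : ¬ϖ ∣ w) : 2 ∣ w - 1 ∨ 2 ∣ w - sqrtd := by
  rw [ϖ_dvd_iff] at hw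
  simp only [two_dvd_iff, re_sub, im_sub, re_one, im_one, re_sqrtd, im_sqrtd]
  omega

theorem four_dvd_sq_sub_one_or_add_one {w : ℤ[i]} (hw : ¬ϖ ∣ w) :
    4 ∣ w ^ 2 - 1 ∨ 4 ∣ w ^ 2 + 1 := by
  rcases two_dvd_sub_one_or_sub_sqrtd hw with h | h
  · simpa using Or.inl (four_dvd_sq_sub_sq_of_two_dvd_sub h)
  · simpa [sqrtd_sq] using Or.inr (four_dvd_sq_sub_sq_of_two_dvd_sub h)

theorem four_dvd_pow_four_sub_one {w : ℤ[i]} (hw : ¬ϖ ∣ w) : 4 ∣ w ^ 4 - 1 := by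
  rw [show w ^ 4 - 1 = (w ^ 2 - 1) * (w ^ 2 + 1) by ring]
  rcases four_dvd_sq_sub_one_or_add_one hw with h | h
  exacts [h.mul_right _, h.mul_left _]

theorem isUnit_iff {u : ℤ[i]} : IsUnit u ↔ u = 1 ∨ u = -1 ∨ u = sqrtd ∨ u = -sqrtd := by
  refine ⟨fun h => ?_, ?_⟩
  · obtain ⟨a, b⟩ := u
    have hnorm : a * a + b * b = 1 := by
      simpa [norm_def] using (norm_eq_one_iff' (by norm_num) _).2 h
    have : -1 ≤ a := by nlinarith
    have : a ≤ 1 := by nlinarith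
    have : -1 ≤ b := by nlinarith
    have : b ≤ 1 := by nlinarith
    interval_cases a <;> interval_cases b <;> simp_all <;> decide
  · rintro (rfl | rfl | rfl | rfl)
    exacts [isUnit_one, isUnit_one.neg, isUnit_sqrtd, isUnit_sqrtd.neg]

theorem eq_of_four_dvd_sub {u v : ℤ[i]} (hu : IsUnit u) (hv : IsUnit v) (h : 4 ∣ u - v) :
    u = v := by
  rw [four_dvd_iff] at h
  rcases isUnit_iff.1 hu with rfl | rfl | rfl | rfl <;>
    rcases isUnit_iff.1 hv with rfl | rfl | rfl | rfl <;> simp_all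

theorem exists_isUnit_eq_sq_mul {n : ℕ} {ε δ η x y z : ℤ[i]} (hδ : IsUnit δ) (hη : IsUnit η)
    (hy : ¬ϖ ∣ y) (hz : ¬ϖ ∣ z) (h : ε * (ϖ ^ (n + 1) * x) ^ 4 + δ * y ^ 4 = η * z ^ 2) :
    ∃ θ, IsUnit θ ∧ δ = θ ^ 2 * η := by
  have h4 : 4 ∣ ε * (ϖ ^ (n + 1) * x) ^ 4 :=
    ⟨-(ε * (ϖ ^ n * x) ^ 4), by linear_combination ε * (ϖ ^ n * x) ^ 4 * ϖ_pow_four⟩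
  have hδη : ∀ s, 4 ∣ z ^ 2 - s → 4 ∣ δ - s * η := fun s hs => by
    have e : δ - s * η = η * (z ^ 2 - s) - δ * (y ^ 4 - 1) - ε * (ϖ ^ (n + 1) * x) ^ 4 := by
      linear_combination h
    rw [e]
    exact ((hs.mul_left η).sub ((four_dvd_pow_four_sub_one hy).mul_left δ)).sub h4
  rcases four_dvd_sq_sub_one_or_add_one hz with hz' | hz'
  · exact ⟨1, isUnit_one, by simpa using eq_of_four_dvd_sub hδ hη (by simpa using hδη 1 hz')⟩
  · refine ⟨sqrtd, isUnit_sqrtd, ?_⟩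
    rw [sqrtd_sq, neg_one_mul]
    exact eq_of_four_dvd_sub hδ hη.neg (by simpa using hδη (-1) (by simpa using hz'))

theorem exists_mul_eq_and_sub_eq {n : ℕ} {ε δ η x y z : ℤ[i]} (hε : IsUnit ε) (hδ : IsUnit δ)
    (hη : IsUnit η) (hy : ¬ϖ ∣ y) (hz : ¬ϖ ∣ z)
    (h : ε * (ϖ ^ (n + 1) * x) ^ 4 + δ * y ^ 4 = η * z ^ 2) :
    ∃ ε' θ A B, IsUnit ε' ∧ IsUnit θ ∧ A * B = ε' * (ϖ ^ n * x) ^ 4 ∧ B - A = θ * y ^ 2 ∧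
      ¬ϖ ∣ A + B := by
  obtain ⟨θ, hθ, rfl⟩ := exists_isUnit_eq_sq_mul hδ hη hy hz h
  obtain ⟨η, rfl⟩ := hη
  have hprod : (z - θ * y ^ 2) * (z + θ * y ^ 2) = ϖ ^ 4 * (↑η⁻¹ * ε * (ϖ ^ n * x) ^ 4) := by
    linear_combination (-(↑η⁻¹ : ℤ[i])) * h - (z ^ 2 - θ ^ 2 * y ^ 4) * η.inv_mul
  obtain ⟨⟨A, hA⟩, ⟨B, hB⟩⟩ := prime_ϖ.pow_dvd_and_pow_dvd_of_dvd_sub (k := 2)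
    (a := z - θ * y ^ 2) (b := z + θ * y ^ 2)
    ⟨sqrtd * θ * y ^ 2, by
      linear_combination (-sqrtd * θ * y ^ 2) * ϖ_sq - 2 * θ * y ^ 2 * sqrtd_sq⟩
    (by rw [hprod]; exact dvd_mul_right _ _)
  have hϖ2 : ϖ ^ 2 ≠ 0 := pow_ne_zero 2 prime_ϖ.ne_zero
  have hsum : A + B = -sqrtd * z := mul_left_cancel₀ hϖ2 <| by
    linear_combination -hA - hB + sqrtd * z * ϖ_sq + 2 * z * sqrtd_sq
  refine ⟨↑η⁻¹ * ε, -sqrtd * θ, A, B, η⁻¹.isUnit.mul hε, isUnit_sqrtd.neg.mul hθ, ?_, ?_, ?_⟩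
  · refine mul_left_cancel₀ (mul_ne_zero hϖ2 hϖ2) ?_
    linear_combination hprod - (z + θ * y ^ 2) * hA - ϖ ^ 2 * A * hB
  · refine mul_left_cancel₀ hϖ2 ?_
    linear_combination hA - hB + sqrtd * θ * y ^ 2 * ϖ_sq + 2 * θ * y ^ 2 * sqrtd_sq
  · rwa [hsum, isUnit_sqrtd.neg.dvd_mul_left]

theorem exists_unit_mul_pow_four_add_eq {n : ℕ} {ε θ x y A B : ℤ[i]} (hε : IsUnit ε) (hθ : IsUnit θ)
    (hx : ¬ϖ ∣ x) (hxy : IsCoprime x y) (hA : ¬ϖ ∣ A)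
    (hAB : A * B = ε * (ϖ ^ n * x) ^ 4) (hBA : B - A = θ * y ^ 2) :
    ∃ ε' δ' s r, IsUnit ε' ∧ IsUnit δ' ∧ ¬ϖ ∣ s ∧ ¬ϖ ∣ r ∧ IsCoprime s r ∧
      ε' * (ϖ ^ n * s) ^ 4 + δ' * r ^ 4 = θ * y ^ 2 := by
  have hϖ : (ϖ ^ n) ^ 4 ≠ 0 := pow_ne_zero _ (pow_ne_zero _ prime_ϖ.ne_zero)
  obtain ⟨B₀, rfl⟩ : (ϖ ^ n) ^ 4 ∣ B := by
    rw [← pow_mul]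
    refine prime_ϖ.pow_dvd_of_dvd_mul_left _ hA ⟨ε * x ^ 4, ?_⟩
    rw [hAB]; ring
  have hAB₀ : A * B₀ = ε * x ^ 4 := mul_left_cancel₀ hϖ (by linear_combination hAB)
  have hx₀ : ¬ϖ ∣ ε * x ^ 4 := by
    rw [hε.dvd_mul_left]; exact fun h => hx (prime_ϖ.dvd_of_dvd_pow h)
  have hAy : IsCoprime A y :=
    ((isCoprime_mul_unit_left_left hε _ _).2 hxy.pow_left).of_isCoprime_of_dvd_left
      (hAB₀ ▸ dvd_mul_right A B₀)
  have hAB' : IsCoprime A B₀ := by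
    have : IsCoprime A ((ϖ ^ n) ^ 4 * B₀) := by
      rw [show (ϖ ^ n) ^ 4 * B₀ = A * 1 + θ * y ^ 2 by linear_combination hBA,
        IsCoprime.mul_add_left_right_iff, isCoprime_mul_unit_left_right hθ]
      exact hAy.pow_right
    exact this.of_mul_right_right
  have hassoc : Associated (x ^ 4) (A * B₀) := hAB₀ ▸ (associated_unit_mul_left _ _ hε).symm
  obtain ⟨r, u, hr⟩ := exists_associated_pow_of_associated_pow_mul hAB' hassoc
  obtain ⟨s, v, hs⟩ :=
    exists_associated_pow_of_associated_pow_mul hAB'.symm (mul_comm A B₀ ▸ hassoc)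
  have hrA : r ∣ A := ⟨r ^ 3 * u, by rw [← hr]; ring⟩
  have hsB₀ : s ∣ B₀ := ⟨s ^ 3 * v, by rw [← hs]; ring⟩
  refine ⟨v, -u, s, r, v.isUnit, u.isUnit.neg, fun h => hx₀ ?_, fun h => hA (h.trans hrA),
    (hAB'.symm.of_isCoprime_of_dvd_left hsB₀).of_isCoprime_of_dvd_right hrA, ?_⟩
  · exact (h.trans hsB₀).trans ⟨A, by rw [← hAB₀, mul_comm]⟩
  · linear_combination hBA + (ϖ ^ n) ^ 4 * hs - hr

theorem unit_mul_pow_four_add_ne (n : ℕ) {ε δ η x y z : ℤ[i]} (hε : IsUnit ε)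
    (hδ : IsUnit δ) (hη : IsUnit η) (hx : ¬ϖ ∣ x) (hy : ¬ϖ ∣ y) (hz : ¬ϖ ∣ z)
    (hxy : IsCoprime x y) : ε * (ϖ ^ (n + 1) * x) ^ 4 + δ * y ^ 4 ≠ η * z ^ 2 := by
  induction n generalizing ε δ η x y z with
  | zero =>
    intro h
    obtain ⟨ε', θ, A, B, hε', -, hAB, -, hsum⟩ := exists_mul_eq_and_sub_eq hε hδ hη hy hz h
    have hodd : ¬ϖ ∣ A * B := by
      rw [hAB, pow_zero, one_mul, hε'.dvd_mul_left]
      exact fun h => hx (prime_ϖ.dvd_of_dvd_pow h)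
    rw [prime_ϖ.dvd_mul, not_or] at hodd
    exact hsum (ϖ_dvd_add hodd.1 hodd.2)
  | succ n ih =>
    intro h
    obtain ⟨ε', θ, A, B, hε', hθ, hAB, hBA, hsum⟩ := exists_mul_eq_and_sub_eq hε hδ hη hy hz h
    rcases not_and_or.1 (fun hAB : ϖ ∣ A ∧ ϖ ∣ B => hsum (dvd_add hAB.1 hAB.2)) with hA | hB
    · obtain ⟨ε'', δ'', s, r, hε'', hδ'', hs, hr, hsr, h'⟩ :=
        exists_unit_mul_pow_four_add_eq hε' hθ hx hxy hA hAB hBA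
      exact ih hε'' hδ'' hθ hs hr hy hsr h'
    · obtain ⟨ε'', δ'', s, r, hε'', hδ'', hs, hr, hsr, h'⟩ :=
        exists_unit_mul_pow_four_add_eq hε' hθ.neg hx hxy hB (by rw [mul_comm, hAB])
          (by linear_combination -hBA)
      exact ih hε'' hδ'' hθ.neg hs hr hy hsr h'

theorem exists_associated_sq_of_eight_mul_eq_sq {m g c : ℤ[i]} (hmg : IsCoprime m g)
    (h : c ^ 2 = 8 * m * g) : ∃ q p, Associated (q ^ 2) m ∧ Associated (p ^ 2) g := by
  have h8 : (8 : ℤ[i]) = sqrtd * (ϖ ^ 3) ^ 2 := by decide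
  obtain ⟨c', rfl⟩ : ϖ ^ 3 ∣ c :=
    (IsIntegrallyClosed.pow_dvd_pow_iff two_ne_zero).1 ⟨sqrtd * m * g, by rw [h, h8]; ring⟩
  have hc' : (sqrtd * m) * g = c' ^ 2 :=
    mul_left_cancel₀ (pow_ne_zero 2 (pow_ne_zero 3 prime_ϖ.ne_zero))
      (by linear_combination -h - m * g * h8)
  have hmg' : IsCoprime (sqrtd * m) g := (isCoprime_mul_unit_left_left isUnit_sqrtd _ _).2 hmg
  obtain ⟨q, hq⟩ := exists_associated_pow_of_mul_eq_pow' hmg' hc'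
  obtain ⟨p, hp⟩ := exists_associated_pow_of_mul_eq_pow' hmg'.symm (mul_comm (sqrtd * m) g ▸ hc')
  exact ⟨q, p, hq.trans (associated_unit_mul_left _ _ isUnit_sqrtd), hp⟩

theorem eq_zero_of_pow_four_sub_pow_four_eq_sq_of_four_dvd {a b c : ℤ[i]} (ha : ¬ϖ ∣ a)
    (hb : ¬ϖ ∣ b) (hab : IsCoprime a b) (h4 : 4 ∣ a ^ 2 - b ^ 2) (h : a ^ 4 - b ^ 4 = c ^ 2) :
    c = 0 := by
  -- with `g = a² - 2m`: `a² - b² = 4m`, `a² + b² = 2g` and `c² = 8mg`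
  obtain ⟨m, hm⟩ := h4
  have hg : ¬ϖ ∣ a ^ 2 - 2 * m := fun hg => ha <| prime_ϖ.dvd_of_dvd_pow (n := 2) <| by
    simpa using hg.add (ϖ_dvd_two.mul_right m)
  have hmg : IsCoprime m (a ^ 2 - 2 * m) := by
    obtain ⟨u, v, huv⟩ := hab.pow (m := 2) (n := 2)
    exact ⟨2 * (u - v), u + v, by linear_combination huv + v * hm⟩
  by_contra hc
  have hm0 : m ≠ 0 := by
    rintro rfl
    exact hc (pow_eq_zero_iff two_ne_zero |>.1 (by linear_combination -h + (a ^ 2 + b ^ 2) * hm :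
      c ^ 2 = 0))
  obtain ⟨q, p, ⟨u, hu⟩, ⟨v, hv⟩⟩ :=
    exists_associated_sq_of_eight_mul_eq_sq (c := c) hmg
      (by linear_combination -h + (a ^ 2 + b ^ 2 - 4 * m) * hm)
  have hq0 : q ≠ 0 := by rintro rfl; simp at hu; exact hm0 hu.symm
  obtain ⟨j, q₀, hq₀, rfl⟩ := WfDvdMonoid.max_power_factor hq0 prime_ϖ.irreducible
  have hpg : p ∣ a ^ 2 - 2 * m := ⟨p * v, by rw [← hv]; ring⟩
  have hq₀m : q₀ ∣ m := ⟨ϖ ^ (2 * j) * q₀ * u, by rw [← hu]; ring⟩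
  refine unit_mul_pow_four_add_ne j (z := a * b) (u.isUnit.pow 2) (v.isUnit.pow 2) isUnit_one hq₀
    (fun h => hg (h.trans hpg)) (by rw [prime_ϖ.dvd_mul]; tauto)
    ((hmg.of_isCoprime_of_dvd_left hq₀m).of_isCoprime_of_dvd_right hpg) ?_
  -- `(ab)² = g² - 4m²`, with `m = u (ϖʲ q₀)²`, `g = v p²` and `-4 = ϖ⁴`
  linear_combination ((ϖ ^ j * q₀) ^ 2 * u) ^ 2 * ϖ_pow_four - 4 * ((ϖ ^ j * q₀) ^ 2 * u + m) * hu
    + (p ^ 2 * v + a ^ 2 - 2 * m) * hv + a ^ 2 * hm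

theorem eq_zero_of_pow_four_sub_pow_four_eq_sq {a b c : ℤ[i]} (ha : ¬ϖ ∣ a) (hb : ¬ϖ ∣ b)
    (hab : IsCoprime a b) (h : a ^ 4 - b ^ 4 = c ^ 2) : c = 0 := by
  have hib : (sqrtd * b) ^ 2 = -b ^ 2 := by linear_combination b ^ 2 * sqrtd_sq
  have key : 4 ∣ a ^ 2 - b ^ 2 ∨ 4 ∣ a ^ 2 - (sqrtd * b) ^ 2 := by
    rw [hib, sub_neg_eq_add]
    rcases four_dvd_sq_sub_one_or_add_one ha with ha' | ha' <;>
      rcases four_dvd_sq_sub_one_or_add_one hb with hb' | hb'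
    · exact .inl (by simpa using ha'.sub hb')
    · exact .inr (by simpa using ha'.add hb')
    · exact .inr (by simpa [add_comm] using ha'.add hb')
    · exact .inl (by simpa using ha'.sub hb')
  rcases key with h4 | h4
  · exact eq_zero_of_pow_four_sub_pow_four_eq_sq_of_four_dvd ha hb hab h4 h
  · refine eq_zero_of_pow_four_sub_pow_four_eq_sq_of_four_dvd ha
      (isUnit_sqrtd.dvd_mul_left.not.2 hb)
      ((isCoprime_mul_unit_left_right isUnit_sqrtd _ _).2 hab) h4 ?_
    linear_combination h - b ^ 4 * (sqrtd ^ 2 - 1) * sqrtd_sq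

theorem not_ϖ_dvd_of_add_eq_sqrtd_mul_sq {a b c : ℤ[i]} (hab : IsCoprime a b)
    (h : a ^ 4 + b ^ 4 = sqrtd * c ^ 2) : ¬ϖ ∣ a := by
  rintro ⟨a, rfl⟩
  have hb : ¬ϖ ∣ b := fun hb => prime_ϖ.not_isUnit (hab.isUnit_of_dvd' (dvd_mul_right ϖ a) hb)
  have h4 : 4 ∣ sqrtd * c ^ 2 - 1 := by
    rw [show sqrtd * c ^ 2 - 1 = 4 * -a ^ 4 + (b ^ 4 - 1) by
      linear_combination -h + a ^ 4 * ϖ_pow_four]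
    exact (dvd_mul_right 4 _).add (four_dvd_pow_four_sub_one hb)
  have hc : ¬ϖ ∣ c := fun hc => prime_ϖ.not_dvd_one <| by
    simpa using ((dvd_pow hc two_ne_zero).mul_left sqrtd).sub
      ((ϖ_dvd_two.trans ⟨2, by norm_num⟩).trans h4)
  rcases four_dvd_sq_sub_one_or_add_one hc with hc' | hc'
  · have h' : (4 : ℤ[i]) ∣ sqrtd - 1 := by convert h4.sub (hc'.mul_left sqrtd) using 1; ring
    exact absurd (eq_of_four_dvd_sub isUnit_sqrtd isUnit_one h') (by decide)
  · have h' : (4 : ℤ[i]) ∣ -sqrtd - 1 := by convert h4.sub (hc'.mul_left sqrtd) using 1; ring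
    exact absurd (eq_of_four_dvd_sub isUnit_sqrtd.neg isUnit_one h') (by decide)

theorem pow_four_eq_of_isCoprime {a b c : ℤ[i]} (hab : IsCoprime a b)
    (h : a ^ 4 + b ^ 4 = sqrtd * c ^ 2) : a ^ 4 = b ^ 4 := by
  have ha := not_ϖ_dvd_of_add_eq_sqrtd_mul_sq hab h
  have hb := not_ϖ_dvd_of_add_eq_sqrtd_mul_sq hab.symm (c := c) (by linear_combination h)
  obtain ⟨c₁, rfl⟩ : ϖ ∣ c := prime_ϖ.dvd_of_dvd_pow (n := 2) <|
    isUnit_sqrtd.dvd_mul_left.1 (h ▸ ϖ_dvd_add (fun h => ha (prime_ϖ.dvd_of_dvd_pow h))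
      (fun h => hb (prime_ϖ.dvd_of_dvd_pow h)))
  have h₁ : a ^ 4 + b ^ 4 = -2 * c₁ ^ 2 := by
    linear_combination h + sqrtd * c₁ ^ 2 * ϖ_sq + 2 * c₁ ^ 2 * sqrtd_sq
  have hc₁ : ¬ϖ ∣ c₁ := by
    rintro ⟨c₂, rfl⟩
    have h4 : (4 : ℤ[i]) ∣ 1 - -1 := by
      convert dvd_neg.2 (((four_dvd_pow_four_sub_one ha).add (four_dvd_pow_four_sub_one hb)).add
        (dvd_mul_right 4 (sqrtd * c₂ ^ 2))) using 1
      linear_combination h₁ - 2 * c₂ ^ 2 * ϖ_sq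
    exact absurd (eq_of_four_dvd_sub isUnit_one isUnit_one.neg h4) (by decide)
  have hcop : ∀ {a b}, IsCoprime a b → a ^ 4 + b ^ 4 = -2 * c₁ ^ 2 → IsCoprime a c₁ := by
    intro a b hab h
    have : IsCoprime (a ^ 4) (b ^ 4 + a ^ 4 * 1) := hab.pow.add_mul_left_right 1
    rw [mul_one, add_comm, h] at this
    exact (IsCoprime.pow_iff four_pos two_pos).1 this.of_mul_right_right
  have := eq_zero_of_pow_four_sub_pow_four_eq_sq hc₁ (by rw [prime_ϖ.dvd_mul]; tauto)
    ((hcop hab h₁).mul_left (hcop hab.symm (by linear_combination h₁))).symm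
    (by linear_combination (-b ^ 4) * h₁ : c₁ ^ 4 - (a * b) ^ 4 = (c₁ ^ 2 + b ^ 4) ^ 2)
  linear_combination h₁ - 2 * this

theorem pow_four_eq_of_add_eq_sqrtd_mul_sq {a b c : ℤ[i]} (ha : a ≠ 0)
    (h : a ^ 4 + b ^ 4 = sqrtd * c ^ 2) : a ^ 4 = b ^ 4 := by
  obtain ⟨a, b, d, hab, rfl, rfl⟩ := UniqueFactorizationMonoid.exists_reduced_factors _ ha b
  have hd : d ≠ 0 := left_ne_zero_of_mul ha
  obtain ⟨c, rfl⟩ : d ^ 2 ∣ c := (IsIntegrallyClosed.pow_dvd_pow_iff two_ne_zero).1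
    ⟨-sqrtd * (a ^ 4 + b ^ 4), by linear_combination sqrtd * h + c ^ 2 * sqrtd_sq⟩
  have := pow_four_eq_of_isCoprime (c := c) hab.isCoprime
    (mul_left_cancel₀ (pow_ne_zero 4 hd) (by linear_combination h))
  rw [mul_pow, mul_pow, this]

theorem pow_four_eq_of_add_eq_mul_sq {F : Type*} [Field F] [Algebra ℤ[i] F]
    [IsFractionRing ℤ[i] F] {x y z : F} (hx : x ≠ 0)
    (h : x ^ 4 + y ^ 4 = algebraMap ℤ[i] F sqrtd * z ^ 2) : x ^ 4 = y ^ 4 := by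
  obtain ⟨⟨d, hd⟩, hint⟩ :=
    IsLocalization.exist_integer_multiples_of_finite (nonZeroDivisors ℤ[i]) ![x, y, z]
  obtain ⟨a, ha⟩ := hint 0
  obtain ⟨b, hb⟩ := hint 1
  obtain ⟨c, hc⟩ := hint 2
  simp only [Matrix.cons_val, Algebra.smul_def] at ha hb hc
  set f := algebraMap ℤ[i] F
  have hf : Function.Injective f := IsFractionRing.injective ℤ[i] F
  have ht : f d ≠ 0 := IsFractionRing.to_map_ne_zero_of_mem_nonZeroDivisors hd
  have key := pow_four_eq_of_add_eq_sqrtd_mul_sq (a := a) (b := b) (c := d * c)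
    (fun h0 => mul_ne_zero ht hx (by rw [← ha, h0, map_zero]))
    (hf (by simp only [map_add, map_mul, map_pow, ha, hb, hc]; linear_combination f d ^ 4 * h))
  apply_fun (f ·) at key
  simp only [map_pow, ha, hb, mul_pow] at key
  exact mul_left_cancel₀ (pow_ne_zero 4 ht) key

end GaussianQuartic

open GaussianQuartic in
/-- If `x, y, z ∈ ℚ(i)` satisfy `x⁴ + y⁴ = i·z²` with `xyz ≠ 0`, then `(x/y)⁴ = 1`
and `(z/y²)² = -2i`. -/
theorem stmt_18 (x y z : K) (hnt : x * y * z ≠ 0)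
    (heq : x ^ 4 + y ^ 4 = I * z ^ 2) :
    (x / y) ^ 4 = 1 ∧ (z / y ^ 2) ^ 2 = -(2 * I) := by
  have hx : x ≠ 0 := left_ne_zero_of_mul (left_ne_zero_of_mul hnt)
  have hy : y ≠ 0 := right_ne_zero_of_mul (left_ne_zero_of_mul hnt)
  have hxy : x ^ 4 = y ^ 4 := pow_four_eq_of_add_eq_mul_sq hx heq
  have hI : I ^ 2 = -1 := by rw [← map_pow, sqrtd_sq, map_neg, map_one]
  refine ⟨by rw [div_pow, hxy, div_self (pow_ne_zero 4 hy)], ?_⟩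
  field_simp
  linear_combination I * heq - I * hxy + z ^ 2 * hI
end
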